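/- arXiv:0910.3463 — 2 statements merged into one kernel-verified Lean document; each statement's English description precedes it below -/
import Mathlib

section
/- Let G be a group, C a central subgroup, φ, ψ endomorphisms of G with φ(C), ψ(C) ⊆ C, and w ∈ G. Suppose x₁ ∈ G and c ∈ C satisfy φ(x₁) = c·w·ψ(x₁). Then there exists x ∈ G with φ(x) = w·ψ(x) if and only if there exists g ∈ G with φ'(g)·ψ(g)⁻¹ = c, where φ'(h) = w⁻¹φ(h)w. -/
/-- Given one "approximate" solution φ(x₁) = c·w·ψ(x₁) with c central, the
equation φ(x) = w·ψ(x) is solvable iff c is a value of g ↦ w⁻¹φ(g)w·ψ(g)⁻¹. -/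
theorem solvable_iff_c_in_image {G : Type*} [Group G] (C : Subgroup G)
    (hC : C ≤ Subgroup.center G) (φ ψ : G →* G)
    (hφC : ∀ a ∈ C, φ a ∈ C) (hψC : ∀ a ∈ C, ψ a ∈ C)
    (w c : G) (hc : c ∈ C) (x₁ : G) (hx₁ : φ x₁ = c * w * ψ x₁) :
    (∃ x : G, φ x = w * ψ x) ↔ (∃ g : G, w⁻¹ * φ g * w * (ψ g)⁻¹ = c) := by
  have hcc : ∀ a : G, a * c = c * a :=
    Subgroup.mem_center_iff.mp (hC hc)
  constructor
  · rintro ⟨x, hx⟩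
    refine ⟨x₁ * x⁻¹, ?_⟩
    have : φ (x₁ * x⁻¹) = φ x₁ * (φ x)⁻¹ := by simp
    rw [this, hx₁, hx, map_mul, map_inv]
    rw [← hcc w]
    group
  · rintro ⟨g, hg⟩
    refine ⟨g⁻¹ * x₁, ?_⟩
    have hφg : φ g = w * c * ψ g * w⁻¹ := by
      rw [← hg]; group
    rw [map_mul, map_inv, hφg, hx₁, map_mul, map_inv, ← hcc w]
    group
end

section
/- Let G be a nilpotent group of class 2 (so [G,G] ⊆ Z(G)), and φ, ψ endomorphisms of G with φ([G,G]) ⊆ [G,G] and ψ([G,G]) ⊆ [G,G]. Then for w ∈ G, the equation φ(x) = w·ψ(x) has a solution in G if and only if there exist x₁ ∈ G and c ∈ [G,G] with φ(x₁) = c·w·ψ(x₁) and c ∈ {w⁻¹φ(g)w·ψ(g)⁻¹ | g ∈ G, w⁻¹φ(g)w·ψ(g)⁻¹ ∈ [G,G]}. -/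
/-! A solution of `φ x = c * w * ψ x` with `c` central and of the form `w⁻¹ * φ g * w * (ψ g)⁻¹`
is corrected to a solution of `φ x = w * ψ x` by replacing `x` with `g⁻¹ * x`: centrality turns
`c * w` into `w * c = φ g * w * (ψ g)⁻¹`, and the factors `φ g`, `(ψ g)⁻¹` are absorbed into `x`. -/

theorem MonoidHom.map_inv_mul_eq_mul_map_inv_mul {G H : Type*} [Group G] [Group H]
    (φ ψ : G →* H) {w : H} {x g : G} (h : φ x = φ g * w * (ψ g)⁻¹ * ψ x) :
    φ (g⁻¹ * x) = w * ψ (g⁻¹ * x) := by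
  simp only [map_mul, map_inv, h]
  group

theorem class_two_twisted_conj_general {G : Type*} [Group G]
    (hG : commutator G ≤ Subgroup.center G) (φ ψ : G →* G) (w : G) :
    (∃ x : G, φ x = w * ψ x) ↔
      ∃ (x₁ c : G), c ∈ commutator G ∧ φ x₁ = c * w * ψ x₁ ∧
        ∃ g : G, w⁻¹ * φ g * w * (ψ g)⁻¹ ∈ commutator G ∧
          w⁻¹ * φ g * w * (ψ g)⁻¹ = c := by
  constructor
  · rintro ⟨x, hx⟩
    exact ⟨x, 1, one_mem _, by rw [hx, one_mul], 1, by simp [one_mem], by simp⟩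
  · rintro ⟨x, c, hc, hx, g, -, rfl⟩
    have hcw : w * (w⁻¹ * φ g * w * (ψ g)⁻¹) = (w⁻¹ * φ g * w * (ψ g)⁻¹) * w :=
      Subgroup.mem_center_iff.mp (hG hc) w
    refine ⟨g⁻¹ * x, φ.map_inv_mul_eq_mul_map_inv_mul ψ ?_⟩
    rw [hx, ← hcw]
    group

/-- The inductive step of the twisted conjugacy decision procedure, for
nilpotent groups of class 2 (commutator subgroup central). -/
theorem class_two_twisted_conj {G : Type*} [Group G]
    (hG : commutator G ≤ Subgroup.center G) (φ ψ : G →* G)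
    (hφ : ∀ x ∈ commutator G, φ x ∈ commutator G)
    (hψ : ∀ x ∈ commutator G, ψ x ∈ commutator G) (w : G) :
    (∃ x : G, φ x = w * ψ x) ↔
      ∃ (x₁ c : G), c ∈ commutator G ∧ φ x₁ = c * w * ψ x₁ ∧
        ∃ g : G, w⁻¹ * φ g * w * (ψ g)⁻¹ ∈ commutator G ∧
          w⁻¹ * φ g * w * (ψ g)⁻¹ = c :=
  class_two_twisted_conj_general hG φ ψ w
end
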